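/- Wronskian transformation under the Jacobi slash operator: for a vector Φ = (φ_1, ..., φ_n) of holomorphic functions on ℍ × ℂ, σ ∈ SL₂(ℤ), automorphy factor ϕ, and index m, the z-Wronskian Wron_z Φ := det(Φ, ∂_z Φ, ..., ∂_z^{n-1} Φ) satisfies Wron_z(Φ|_m[σ,ϕ]) = (Wron_z Φ)|_{mn}[σ, j^{n(n-1)/2} ϕ^n], where the slash operator acts coordinatewise on Φ and j(σ,τ) = cτ + d. -/

import Mathlib

open Complex

open Matrix MatrixGroups

/-- The automorphy factor `j(σ,τ) = cτ + d`. -/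
noncomputable def jfac (σ : SL(2, ℤ)) (τ : ℂ) : ℂ :=
  ((σ : Matrix (Fin 2) (Fin 2) ℤ) 1 0 : ℂ) * τ + ((σ : Matrix (Fin 2) (Fin 2) ℤ) 1 1 : ℂ)

/-- The Jacobi slash operator of index `m` with automorphy factor `ϕ`. -/
noncomputable def jacobiSlash (m : ℚ) (σ : SL(2, ℤ)) (ϕ : ℂ → ℂ) (φ : ℂ → ℂ → ℂ)
    (τ z : ℂ) : ℂ :=
  (ϕ τ)⁻¹ *
    Complex.exp (-(2 * Real.pi * Complex.I * (m : ℂ) *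
        ((σ : Matrix (Fin 2) (Fin 2) ℤ) 1 0 : ℂ) * z ^ 2) / jfac σ τ) *
    φ ((((σ : Matrix (Fin 2) (Fin 2) ℤ) 0 0 : ℂ) * τ +
          ((σ : Matrix (Fin 2) (Fin 2) ℤ) 0 1 : ℂ)) / jfac σ τ)
      (z / jfac σ τ)

/-- The Wronskian in the variable z of a vector of functions on H x C. -/
noncomputable def wronZ (n : ℕ) (Φ : Fin n → ℂ → ℂ → ℂ) (τ z : ℂ) : ℂ :=
  (Matrix.of fun i k : Fin n => iteratedDeriv (k : ℕ) (fun w => Φ i τ w) z).det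

open Finset
lemma diff_iter {f : ℂ → ℂ} (hf : Differentiable ℂ f) (l : ℕ) :
    Differentiable ℂ (iteratedDeriv l f) :=
  (hf.contDiff (n := (⊤ : WithTop ℕ∞))).differentiable_iteratedDeriv l
    (by exact_mod_cast WithTop.coe_lt_top _)

lemma iter_cmul {f : ℂ → ℂ} (hf : Differentiable ℂ f) (a : ℂ) (k : ℕ) :
    iteratedDeriv k (fun w => a * f w) = fun z => a * iteratedDeriv k f z := by
  induction k with
  | zero => simp
  | succ k ih =>
    funext z
    rw [iteratedDeriv_succ, ih, iteratedDeriv_succ,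
      deriv_const_mul _ ((diff_iter hf k).differentiableAt)]

lemma iter_leibniz {f g : ℂ → ℂ} (hf : Differentiable ℂ f) (hg : Differentiable ℂ g)
    (k : ℕ) (z : ℂ) :
    iteratedDeriv k (fun w => f w * g w) z =
      ∑ l ∈ range (k + 1), ((k.choose l : ℂ) * (iteratedDeriv l f z * iteratedDeriv (k - l) g z)) := by
  induction k generalizing z with
  | zero => simp
  | succ k ih =>
    have hfun : iteratedDeriv k (fun w => f w * g w) =
        fun z => ∑ l ∈ range (k + 1),
          ((k.choose l : ℂ) * (iteratedDeriv l f z * iteratedDeriv (k - l) g z)) := funext ih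
    rw [iteratedDeriv_succ, hfun]
    rw [deriv_fun_sum (fun l _ => by
      exact (((diff_iter hf l).differentiableAt.mul
        (diff_iter hg (k - l)).differentiableAt).const_mul _))]
    have hterm : ∀ l ∈ range (k + 1),
        deriv (fun z => (k.choose l : ℂ) *
            (iteratedDeriv l f z * iteratedDeriv (k - l) g z)) z =
          (k.choose l : ℂ) * (iteratedDeriv (l + 1) f z * iteratedDeriv (k - l) g z) +
          (k.choose l : ℂ) * (iteratedDeriv l f z * iteratedDeriv (k - l + 1) g z) := by
      intro l _
      rw [deriv_const_mul (d := fun z => iteratedDeriv l f z * iteratedDeriv (k - l) g z) _ ((diff_iter hf l).differentiableAt.mul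
        (diff_iter hg (k - l)).differentiableAt),
        deriv_fun_mul (diff_iter hf l).differentiableAt (diff_iter hg (k - l)).differentiableAt,
        ← iteratedDeriv_succ, ← iteratedDeriv_succ]
      ring
    rw [Finset.sum_congr rfl hterm, Finset.sum_add_distrib]
    rw [Finset.sum_range_succ' (fun l => ((k + 1).choose l : ℂ) *
      (iteratedDeriv l f z * iteratedDeriv (k + 1 - l) g z)) (k + 1)]
    have hpascal : ∀ i ∈ range (k + 1),
        (((k + 1).choose (i + 1) : ℂ) *
            (iteratedDeriv (i + 1) f z * iteratedDeriv (k + 1 - (i + 1)) g z)) =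
          (k.choose i : ℂ) * (iteratedDeriv (i + 1) f z * iteratedDeriv (k - i) g z) +
          (k.choose (i + 1) : ℂ) * (iteratedDeriv (i + 1) f z * iteratedDeriv (k - i) g z) := by
      intro i _
      rw [Nat.succ_sub_succ, Nat.choose_succ_succ]
      push_cast
      ring
    rw [Finset.sum_congr rfl hpascal, Finset.sum_add_distrib]
    have h2 : ∑ l ∈ range (k + 1),
        ((k.choose l : ℂ) * (iteratedDeriv l f z * iteratedDeriv (k - l + 1) g z)) =
        (∑ i ∈ range (k + 1),
          ((k.choose (i + 1) : ℂ) * (iteratedDeriv (i + 1) f z * iteratedDeriv (k - i) g z))) +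
        (((k + 1).choose 0 : ℂ) *
          (iteratedDeriv 0 f z * iteratedDeriv (k + 1 - 0) g z)) := by
      rw [Finset.sum_range_succ' (fun l => (k.choose l : ℂ) *
        (iteratedDeriv l f z * iteratedDeriv (k - l + 1) g z)) k]
      rw [Finset.sum_range_succ (fun i => (k.choose (i + 1) : ℂ) *
        (iteratedDeriv (i + 1) f z * iteratedDeriv (k - i) g z)) k]
      rw [Nat.choose_succ_self]
      simp only [Nat.cast_zero, zero_mul, add_zero, Nat.choose_zero_right, Nat.cast_one,
        Nat.sub_zero, one_mul]
      congr 1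
      apply Finset.sum_congr rfl
      intro i hi
      have hk : k - (i + 1) + 1 = k - i := by
        have := Finset.mem_range.mp hi; omega
      rw [hk]
    rw [h2]
    ring

lemma jfac_ne_zero (σ : SL(2, ℤ)) (τ : ℂ) (hτ : 0 < τ.im) : jfac σ τ ≠ 0 := by
  intro h
  have hdet : (σ : Matrix (Fin 2) (Fin 2) ℤ).det = 1 := σ.2
  rw [Matrix.det_fin_two] at hdet
  have him := congrArg Complex.im h
  simp only [jfac, Complex.add_im, Complex.mul_im, Complex.intCast_im, Complex.intCast_re,
    zero_mul, mul_zero, add_zero, zero_add, Complex.zero_im] at him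
  have hc : ((σ : Matrix (Fin 2) (Fin 2) ℤ) 1 0 : ℝ) = 0 := by
    rcases mul_eq_zero.mp him with h' | h'
    · exact h'
    · exact absurd h' (ne_of_gt hτ)
  have hc0 : (σ : Matrix (Fin 2) (Fin 2) ℤ) 1 0 = 0 := by exact_mod_cast hc
  have hre := congrArg Complex.re h
  simp only [jfac, hc0, Int.cast_zero, zero_mul, zero_add, Complex.intCast_re,
    Complex.zero_re] at hre
  have hd0 : (σ : Matrix (Fin 2) (Fin 2) ℤ) 1 1 = 0 := by exact_mod_cast hre
  rw [hc0, hd0] at hdet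
  simp at hdet

theorem stmt_19 (n : ℕ) (m : ℚ) (σ : SL(2, ℤ)) (ϕ : ℂ → ℂ) (hϕ : ∀ τ : ℂ, ϕ τ ≠ 0)
    (Φ : Fin n → ℂ → ℂ → ℂ) (hΦ : ∀ i τ, Differentiable ℂ (Φ i τ))
    (τ z : ℂ) (hτ : 0 < τ.im) :
    wronZ n (fun i => jacobiSlash m σ ϕ (Φ i)) τ z =
      jacobiSlash (m * n) σ (fun t => jfac σ t ^ (n * (n - 1) / 2) * ϕ t ^ n)
        (wronZ n Φ) τ z := by
  have hj : jfac σ τ ≠ 0 := jfac_ne_zero σ τ hτ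
  set c : ℂ := ((σ : Matrix (Fin 2) (Fin 2) ℤ) 1 0 : ℂ) with hc
  set j : ℂ := jfac σ τ with hjdef
  set τ' : ℂ := (((σ : Matrix (Fin 2) (Fin 2) ℤ) 0 0 : ℂ) * τ +
      ((σ : Matrix (Fin 2) (Fin 2) ℤ) 0 1 : ℂ)) / j with hτ'
  set q : ℂ := -(2 * (Real.pi : ℂ) * Complex.I * (m : ℂ) * c) / j with hq
  set E : ℂ → ℂ := fun w => Complex.exp (q * w ^ 2) with hEdef
  have hEdiff : Differentiable ℂ E := by
    apply Differentiable.cexp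
    exact (differentiable_const q).mul (differentiable_pow 2)
  have hgdiff : ∀ i : Fin n, Differentiable ℂ (fun w => Φ i τ' (j⁻¹ * w)) :=
    fun i => (hΦ i τ').comp (differentiable_id.const_mul j⁻¹)
  -- rewrite the slashed functions
  have hslash : ∀ i : Fin n, (fun w => jacobiSlash m σ ϕ (Φ i) τ w) =
      fun w => (ϕ τ)⁻¹ * (Φ i τ' (j⁻¹ * w) * E w) := by
    intro i; funext w
    simp only [jacobiSlash, hEdef, ← hjdef, ← hτ', ← hc]
    have h1 : -(2 * (Real.pi : ℂ) * Complex.I * (m : ℂ) * c * w ^ 2) / j = q * w ^ 2 := by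
      rw [hq]; ring
    have h2 : w / j = j⁻¹ * w := by ring
    rw [h1, h2]
    ring
  -- the matrices
  set A : Matrix (Fin n) (Fin n) ℂ := Matrix.of fun i l : Fin n =>
    j⁻¹ ^ (l : ℕ) * iteratedDeriv (l : ℕ) (fun w => Φ i τ' w) (j⁻¹ * z) with hA
  set B : Matrix (Fin n) (Fin n) ℂ := Matrix.of fun l k : Fin n =>
    if (l : ℕ) ≤ (k : ℕ) then
      (ϕ τ)⁻¹ * (((k : ℕ).choose (l : ℕ) : ℂ) * iteratedDeriv ((k : ℕ) - (l : ℕ)) E z)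
    else 0 with hB
  have hentry : ∀ i k : Fin n,
      iteratedDeriv (k : ℕ) (fun w => jacobiSlash m σ ϕ (Φ i) τ w) z = (A * B) i k := by
    intro i k
    rw [hslash i, iter_cmul (f := fun w => Φ i τ' (j⁻¹ * w) * E w) ((hgdiff i).mul hEdiff)]
    beta_reduce
    rw [iter_leibniz (hgdiff i) hEdiff]
    have hfin : (A * B) i k = ∑ l ∈ range n, (fun l : ℕ =>
        (j⁻¹ ^ l * iteratedDeriv l (fun w => Φ i τ' w) (j⁻¹ * z)) *
          (if l ≤ (k : ℕ) then
            (ϕ τ)⁻¹ * (((k : ℕ).choose l : ℂ) * iteratedDeriv ((k : ℕ) - l) E z)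
          else 0)) l := by
      rw [Matrix.mul_apply, ← Fin.sum_univ_eq_sum_range (fun l : ℕ =>
        (j⁻¹ ^ l * iteratedDeriv l (fun w => Φ i τ' w) (j⁻¹ * z)) *
          (if l ≤ (k : ℕ) then
            (ϕ τ)⁻¹ * (((k : ℕ).choose l : ℂ) * iteratedDeriv ((k : ℕ) - l) E z)
          else 0)) n]
      rfl
    rw [hfin]
    rw [← Finset.sum_subset (Finset.range_subset_range.mpr k.2)
      (fun x _ hx => by
        simp only [Finset.mem_range, Nat.lt_succ_iff, not_le] at hx
        rw [if_neg (by omega), mul_zero])]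
    rw [Finset.mul_sum]
    apply Finset.sum_congr rfl
    intro l hl
    have hl' : l ≤ (k : ℕ) := by
      have := Finset.mem_range.mp hl; omega
    rw [if_pos hl']
    have hcm := iteratedDeriv_comp_const_mul (n := l) ((hΦ i τ').contDiff (n := (l : ℕ))) j⁻¹
      (f := fun w => Φ i τ' w)
    have : iteratedDeriv l (fun w => Φ i τ' (j⁻¹ * w)) z =
        j⁻¹ ^ l * iteratedDeriv l (fun w => Φ i τ' w) (j⁻¹ * z) := by
      rw [hcm]
    rw [this]
    ring
  have hM : (Matrix.of fun i k : Fin n =>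
      iteratedDeriv (k : ℕ) (fun w => jacobiSlash m σ ϕ (Φ i) τ w) z) = A * B := by
    ext i k
    exact hentry i k
  have hdetB : B.det = ((ϕ τ)⁻¹ * Complex.exp (q * z ^ 2)) ^ n := by
    have htri : B.BlockTriangular id := by
      intro a b hab
      simp only [hB, Matrix.of_apply]
      rw [if_neg]
      exact not_le.mpr (by exact_mod_cast hab)
    rw [Matrix.det_of_upperTriangular htri]
    have hdiag : ∀ k : Fin n, B k k = (ϕ τ)⁻¹ * Complex.exp (q * z ^ 2) := by
      intro k
      simp [hB, Matrix.of_apply, iteratedDeriv_zero, hEdef]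
    rw [Finset.prod_congr rfl (fun k _ => hdiag k)]
    simp [Finset.prod_const]
  have hdetA : A.det = j⁻¹ ^ (n * (n - 1) / 2) * wronZ n Φ τ' (j⁻¹ * z) := by
    have : A = Matrix.of fun i l : Fin n =>
        (fun l : Fin n => j⁻¹ ^ (l : ℕ)) l *
          (Matrix.of fun i l : Fin n =>
            iteratedDeriv (l : ℕ) (fun w => Φ i τ' w) (j⁻¹ * z)) i l := rfl
    rw [this, Matrix.det_mul_row]
    congr 1
    rw [Finset.prod_pow_eq_pow_sum]
    congr 1
    rw [Fin.sum_univ_eq_sum_range (fun l => l) n, Finset.sum_range_id]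
  -- put everything together
  simp only [wronZ] at hM ⊢
  rw [hM, Matrix.det_mul, hdetA, hdetB, jacobiSlash]
  simp only [← hjdef, ← hτ', ← hc]
  have hzj : z / j = j⁻¹ * z := by ring
  rw [hzj]
  have hexp : Complex.exp (q * z ^ 2) ^ n =
      Complex.exp (-(2 * (Real.pi : ℂ) * Complex.I * ((m * (n : ℚ) : ℚ) : ℂ) * c * z ^ 2) / j) := by
    rw [← Complex.exp_nat_mul]
    congr 1
    rw [hq]
    push_cast
    ring
  rw [mul_pow, hexp]
  rw [mul_inv, ← inv_pow, ← inv_pow]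
  ring
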